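/- arXiv:math/0307138 — 3 statements merged into one kernel-verified Lean document; each statement's English description precedes it below -/
import Mathlib

section
/- Let A be a commutative ring and M a module of finite length u with a Jordan–Hölder filtration having factors T_1, …, T_u (a multiset of simple A-modules). Then for every permutation σ of {1, …, u} there exists a Jordan–Hölder filtration 0 = M_0 ⊂ M_1 ⊂ ⋯ ⊂ M_u = M with M_i/M_{i-1} ≅ T_{σ(i)} for all i. -/
/-!
Common setup: Jordan–Hölder filtrations of finite-dimensional modules, letters
(subsets of `simp A`, i.e. sets of simple finite-dimensional modules taken up to
isomorphism), words of letters, and the left/right basic opens of the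
non-commutative topology on `rep A`.
-/

namespace NCT

/-- The `i`-th factor `F (i+1) / F i` of a chain of submodules. -/
def chainFactor {A : Type} [Ring A] {M : Type} [AddCommGroup M] [Module A M]
    {u : ℕ} (F : Fin (u + 1) → Submodule A M) (i : Fin u) : Type :=
  ↥(F i.succ) ⧸ Submodule.comap (F i.succ).subtype (F i.castSucc)

noncomputable instance {A : Type} [Ring A] {M : Type} [AddCommGroup M] [Module A M]
    {u : ℕ} (F : Fin (u + 1) → Submodule A M) (i : Fin u) :
    AddCommGroup (chainFactor F i) :=
  inferInstanceAs (AddCommGroup (↥(F i.succ) ⧸ Submodule.comap (F i.succ).subtype (F i.castSucc)))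

noncomputable instance {A : Type} [Ring A] {M : Type} [AddCommGroup M] [Module A M]
    {u : ℕ} (F : Fin (u + 1) → Submodule A M) (i : Fin u) :
    Module A (chainFactor F i) :=
  inferInstanceAs (Module A (↥(F i.succ) ⧸ Submodule.comap (F i.succ).subtype (F i.castSucc)))

/-- A Jordan–Hölder filtration: `0 = M₀ ⊆ M₁ ⊆ ⋯ ⊆ M_u = M` with all successive
factors simple (simplicity of the factors forces the inclusions to be strict). -/
def IsJHFiltration {A : Type} [Ring A] {M : Type} [AddCommGroup M] [Module A M]
    {u : ℕ} (F : Fin (u + 1) → Submodule A M) : Prop :=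
  Monotone F ∧ F 0 = ⊥ ∧ F (Fin.last u) = ⊤ ∧
    ∀ i : Fin u, IsSimpleModule A (chainFactor F i)

/-- Membership of a module `N` in a letter `V` (letters are sets of modules,
membership is taken up to isomorphism, so a letter is a subset of `simp A`). -/
def MemLetter {A : Type} [Ring A] (V : Set (ModuleCat.{0} A)) (N : Type)
    [AddCommGroup N] [Module A N] : Prop :=
  ∃ P ∈ V, Nonempty (N ≃ₗ[A] P)

/-- `rep A`: the finite-dimensional (over `k`) `A`-modules. -/
def FDRep (k A : Type) [Field k] [Ring A] [Algebra k A] : Set (ModuleCat.{0} A) :=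
  {M | Module.Finite k (RestrictScalars k A M)}

/-- `simp A`: the simple finite-dimensional `A`-modules. -/
def SimpFD (k A : Type) [Field k] [Ring A] [Algebra k A] : Set (ModuleCat.{0} A) :=
  {M | IsSimpleModule A M ∧ Module.Finite k (RestrictScalars k A M)}

/-- A word of letters. -/
abbrev Word (A : Type) [Ring A] := List (Set (ModuleCat.{0} A))

/-- The left basic open `𝒪^l_w`: finite-dimensional modules admitting a Jordan–Hölder
filtration of length `u ≥ |w|` whose first `|w|` factors lie, in order, in the letters of `w`. -/
def leftOpen (k A : Type) [Field k] [Ring A] [Algebra k A] (w : Word A) :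
    Set (ModuleCat.{0} A) :=
  {M | M ∈ FDRep k A ∧ ∃ (u : ℕ) (F : Fin (u + 1) → Submodule A M) (hu : w.length ≤ u),
    IsJHFiltration F ∧
    ∀ i : Fin w.length, MemLetter (w.get i) (chainFactor F (Fin.castLE hu i))}

/-- The right basic open `𝒪^r_w`: finite-dimensional modules admitting a Jordan–Hölder
filtration of length `u ≥ |w|` whose top `|w|` factors match `w` in order. -/
def rightOpen (k A : Type) [Field k] [Ring A] [Algebra k A] (w : Word A) :
    Set (ModuleCat.{0} A) :=
  {M | M ∈ FDRep k A ∧ ∃ (u : ℕ) (F : Fin (u + 1) → Submodule A M) (hu : w.length ≤ u),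
    IsJHFiltration F ∧
    ∀ i : Fin w.length,
      MemLetter (w.get i) (chainFactor F ⟨u - w.length + i.1, by have := i.isLt; omega⟩)}

/-- `rep(m)` for a multiset of letters `m`: modules with a Jordan–Hölder filtration whose
factors can be matched, by distinct indices, to the occurrences of letters in `m`,
each matched factor lying in its letter. -/
def RepMS (k A : Type) [Field k] [Ring A] [Algebra k A]
    (m : Multiset (Set (ModuleCat.{0} A))) : Set (ModuleCat.{0} A) :=
  {M | M ∈ FDRep k A ∧ ∃ (u : ℕ) (F : Fin (u + 1) → Submodule A M),
    IsJHFiltration F ∧ ∃ (l : Word A) (_ : (l : Multiset (Set (ModuleCat.{0} A))) = m)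
      (f : Fin l.length ↪ Fin u), ∀ j : Fin l.length, MemLetter (l.get j) (chainFactor F (f j))}

/-- The multiset `w ∪ w'`: each letter with the maximum of its multiplicities in `w`, `w'`. -/
noncomputable def wordSup {A : Type} [Ring A] (w w' : Word A) :
    Multiset (Set (ModuleCat.{0} A)) :=
  letI := Classical.decEq (Set (ModuleCat.{0} A))
  (w : Multiset (Set (ModuleCat.{0} A))) ∪ (w' : Multiset (Set (ModuleCat.{0} A)))

/-- `𝒪^l_w ≤ 𝒪^l_{w'}`, i.e. `𝒪^l_w(w ∪ w') ⊆ 𝒪^l_{w'}(w ∪ w')`. -/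
def LeL (k A : Type) [Field k] [Ring A] [Algebra k A] (w w' : Word A) : Prop :=
  leftOpen k A w ∩ RepMS k A (wordSup w w') ⊆ leftOpen k A w' ∩ RepMS k A (wordSup w w')

/-- `𝒪^l_w ≈ 𝒪^l_{w'}`, i.e. `𝒪^l_w(w ∪ w') = 𝒪^l_{w'}(w ∪ w')`. -/
def EquivL (k A : Type) [Field k] [Ring A] [Algebra k A] (w w' : Word A) : Prop :=
  leftOpen k A w ∩ RepMS k A (wordSup w w') = leftOpen k A w' ∩ RepMS k A (wordSup w w')

/-- `𝒪^r_w ≤ 𝒪^r_{w'}`. -/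
def LeR (k A : Type) [Field k] [Ring A] [Algebra k A] (w w' : Word A) : Prop :=
  rightOpen k A w ∩ RepMS k A (wordSup w w') ⊆ rightOpen k A w' ∩ RepMS k A (wordSup w w')

/-- `𝒪^r_w ≈ 𝒪^r_{w'}`. -/
def EquivR (k A : Type) [Field k] [Ring A] [Algebra k A] (w w' : Word A) : Prop :=
  rightOpen k A w ∩ RepMS k A (wordSup w w') = rightOpen k A w' ∩ RepMS k A (wordSup w w')

/-!
Over a commutative ring two simple modules are isomorphic iff they have the same (maximal)
annihilator. So if a length-two subquotient `X ⊂ Y ⊂ Z` has non-isomorphic factors, some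
`a` kills `Z/Y` but acts invertibly on `Y/X`, and `Y' = {z ∈ Z | a • z ∈ X}` is a relative
complement of `Y` in `[X, Z]`; the second isomorphism theorem then gives `Y'/X ≅ Z/Y` and
`Z/Y' ≅ Y/X`. Hence any two adjacent factors of a Jordan–Hölder filtration can be swapped,
and adjacent transpositions generate the symmetric group.
-/

section SimpleModule

variable {R : Type*} [CommRing R] {S S' : Type*} [AddCommGroup S] [Module R S]
  [AddCommGroup S'] [Module R S'] [IsSimpleModule R S] [IsSimpleModule R S']

theorem nonempty_linearEquiv_of_annihilator_eq
    (h : Module.annihilator R S = Module.annihilator R S') : Nonempty (S ≃ₗ[R] S') := by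
  obtain ⟨I, -, ⟨e⟩⟩ := isSimpleModule_iff_quot_maximal.mp ‹IsSimpleModule R S›
  obtain ⟨I', -, ⟨e'⟩⟩ := isSimpleModule_iff_quot_maximal.mp ‹IsSimpleModule R S'›
  have hI : I = I' := by
    rw [← I.annihilator_quotient, ← I'.annihilator_quotient, ← e.annihilator_eq,
      ← e'.annihilator_eq, h]
  subst hI
  exact ⟨e.trans e'.symm⟩

theorem exists_mem_annihilator_notMem_annihilator (h : ¬Nonempty (S ≃ₗ[R] S')) :
    ∃ a ∈ Module.annihilator R S', a ∉ Module.annihilator R S := by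
  by_contra! hle
  exact h <| nonempty_linearEquiv_of_annihilator_eq <|
    (IsSimpleModule.annihilator_isMaximal.eq_of_le IsSimpleModule.annihilator_isMaximal.ne_top
      hle).symm

end SimpleModule

section Factors

open Submodule

variable {R : Type*} {M : Type*} [AddCommGroup M]

theorem nonempty_factor_equiv_of_eq [Ring R] [Module R M] {X Y X' Y' : Submodule R M}
    (hX : X = X') (hY : Y = Y') :
    Nonempty ((↥Y ⧸ comap Y.subtype X) ≃ₗ[R] (↥Y' ⧸ comap Y'.subtype X')) := by
  subst hX hY
  exact ⟨LinearEquiv.refl R _⟩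

theorem nonempty_factor_equiv_of_inf_eq_of_sup_eq [Ring R] [Module R M]
    {X Y Y' Z : Submodule R M} (hinf : Y' ⊓ Y = X) (hsup : Y' ⊔ Y = Z) :
    Nonempty ((↥Y' ⧸ comap Y'.subtype X) ≃ₗ[R] (↥Z ⧸ comap Z.subtype Y)) := by
  subst hinf hsup
  exact ⟨(quotEquivOfEq _ _ (comap_inf _ _ _)).trans
    (LinearMap.quotientInfEquivSupQuotient Y' Y)⟩

variable [CommRing R] [Module R M]

theorem exists_inf_eq_sup_eq_of_mem_annihilator {X Y Z : Submodule R M}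
    (hXY : X ≤ Y) (hYZ : Y ≤ Z) [IsSimpleModule R (↥Y ⧸ comap Y.subtype X)] {a : R}
    (ha : a ∈ Module.annihilator R (↥Z ⧸ comap Z.subtype Y))
    (ha' : a ∉ Module.annihilator R (↥Y ⧸ comap Y.subtype X)) :
    ∃ Y' : Submodule R M, Y' ⊓ Y = X ∧ Y' ⊔ Y = Z := by
  have hZY : ∀ z ∈ Z, a • z ∈ Y := fun z hz => by
    have := Module.mem_annihilator.mp ha (Submodule.Quotient.mk ⟨z, hz⟩)
    rwa [← Quotient.mk_smul, Quotient.mk_eq_zero] at this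
  set φ : Module.End R (↥Y ⧸ comap Y.subtype X) := a • LinearMap.id
  have hφ : Function.Bijective φ :=
    LinearMap.bijective_of_ne_zero fun h => ha' <| Module.mem_annihilator.mpr fun s => by
      simpa [φ] using LinearMap.congr_fun h s
  have hinj : ∀ y ∈ Y, a • y ∈ X → y ∈ X := fun y hy hay => by
    have : φ (Submodule.Quotient.mk ⟨y, hy⟩) = φ 0 := by
      simpa [φ, ← Quotient.mk_smul, Quotient.mk_eq_zero] using hay
    simpa [Quotient.mk_eq_zero] using hφ.injective this
  have hsurj : ∀ y ∈ Y, ∃ y' ∈ Y, a • y' - y ∈ X := fun y hy => by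
    obtain ⟨s, hs⟩ := hφ.surjective (Submodule.Quotient.mk ⟨y, hy⟩)
    obtain ⟨⟨y', hy'⟩, rfl⟩ := Submodule.Quotient.mk_surjective _ s
    exact ⟨y', hy', by simpa [φ, ← Quotient.mk_smul, Submodule.Quotient.eq] using hs⟩
  refine ⟨Z ⊓ X.comap (a • LinearMap.id), le_antisymm ?_ ?_, le_antisymm ?_ ?_⟩
  · rintro y ⟨⟨-, hay⟩, hy⟩
    exact hinj y hy hay
  · intro x hx
    exact ⟨⟨hYZ (hXY hx), X.smul_mem a hx⟩, hXY hx⟩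
  · exact sup_le inf_le_left hYZ
  · intro z hz
    obtain ⟨y', hy', hX⟩ := hsurj _ (hZY z hz)
    have hzy' : a • (z - y') ∈ X := by simpa [smul_sub] using X.neg_mem hX
    exact mem_sup.mpr ⟨z - y', ⟨Z.sub_mem hz (hYZ hy'), hzy'⟩, y', hy', sub_add_cancel z y'⟩

theorem exists_factor_swap {X Y Z : Submodule R M} (hXY : X ≤ Y) (hYZ : Y ≤ Z)
    [IsSimpleModule R (↥Y ⧸ comap Y.subtype X)]
    [IsSimpleModule R (↥Z ⧸ comap Z.subtype Y)] :
    ∃ Y' : Submodule R M, X ≤ Y' ∧ Y' ≤ Z ∧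
      Nonempty ((↥Y' ⧸ comap Y'.subtype X) ≃ₗ[R] (↥Z ⧸ comap Z.subtype Y)) ∧
      Nonempty ((↥Z ⧸ comap Z.subtype Y') ≃ₗ[R] (↥Y ⧸ comap Y.subtype X)) := by
  by_cases hiso : Nonempty ((↥Y ⧸ comap Y.subtype X) ≃ₗ[R] (↥Z ⧸ comap Z.subtype Y))
  · exact ⟨Y, hXY, hYZ, hiso, hiso.map LinearEquiv.symm⟩
  obtain ⟨a, ha, ha'⟩ := exists_mem_annihilator_notMem_annihilator hiso
  obtain ⟨Y', hinf, hsup⟩ := exists_inf_eq_sup_eq_of_mem_annihilator hXY hYZ ha ha'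
  refine ⟨Y', hinf ▸ inf_le_left, hsup ▸ le_sup_left,
    nonempty_factor_equiv_of_inf_eq_of_sup_eq hinf hsup, ?_⟩
  exact (nonempty_factor_equiv_of_inf_eq_of_sup_eq (inf_comm Y' Y ▸ hinf)
    (sup_comm Y' Y ▸ hsup)).map LinearEquiv.symm

end Factors

section Filtration

variable {R : Type} {M : Type} [AddCommGroup M]

variable (R M) in
def factorPermutations [Ring R] [Module R M] (u : ℕ) : Submonoid (Equiv.Perm (Fin u)) where
  carrier := {σ | ∀ F : Fin (u + 1) → Submodule R M, IsJHFiltration F →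
    ∃ G : Fin (u + 1) → Submodule R M, IsJHFiltration G ∧
      ∀ i, Nonempty (chainFactor G i ≃ₗ[R] chainFactor F (σ i))}
  one_mem' F hF := ⟨F, hF, fun _ => ⟨LinearEquiv.refl R _⟩⟩
  mul_mem' {σ τ} hσ hτ F hF := by
    obtain ⟨G, hG, hGF⟩ := hσ F hF
    obtain ⟨H, hH, hHG⟩ := hτ G hG
    exact ⟨H, hH, fun i => ⟨(hHG i).some.trans (hGF (τ i)).some⟩⟩

variable [CommRing R] [Module R M]

theorem exists_isJHFiltration_swap {n : ℕ} {F : Fin (n + 2) → Submodule R M}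
    (hF : IsJHFiltration F) (i : Fin n) :
    ∃ G : Fin (n + 2) → Submodule R M, IsJHFiltration G ∧ ∀ k,
      Nonempty (chainFactor G k ≃ₗ[R] chainFactor F (Equiv.swap i.castSucc i.succ k)) := by
  obtain ⟨hmono, hbot, htop, hsimp⟩ := hF
  -- `chainFactor` is opaque to instance search, so the two factors are restated as quotients
  -- sharing the middle term `F i.castSucc.succ` (`= F i.succ.castSucc` by `rfl`).
  have : IsSimpleModule R (↥(F i.castSucc.succ) ⧸
      Submodule.comap (F i.castSucc.succ).subtype (F i.castSucc.castSucc)) := hsimp i.castSucc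
  have : IsSimpleModule R (↥(F i.succ.succ) ⧸
      Submodule.comap (F i.succ.succ).subtype (F i.castSucc.succ)) := hsimp i.succ
  obtain ⟨Y', hXY', hY'Z, ⟨e₁⟩, ⟨e₂⟩⟩ := exists_factor_swap
    (hmono i.castSucc.castSucc_le_succ) (hmono i.succ.castSucc_le_succ : F i.castSucc.succ ≤ _)
  classical
  set G := Function.update F i.castSucc.succ Y'
  have hGY : G i.castSucc.succ = Y' := Function.update_self _ _ _
  have hG : ∀ k, k ≠ i.castSucc.succ → G k = F k := fun k hk => Function.update_of_ne hk _ _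
  have hstep : ∀ k, G k.castSucc ≤ G k.succ ∧
      Nonempty (chainFactor G k ≃ₗ[R] chainFactor F (Equiv.swap i.castSucc i.succ k)) := by
    intro k
    rcases eq_or_ne k i.castSucc with rfl | h₁
    · have hX : G i.castSucc.castSucc = F i.castSucc.castSucc := hG _ Fin.castSucc_lt_succ.ne
      rw [Equiv.swap_apply_left, hX, hGY]
      exact ⟨hXY', (nonempty_factor_equiv_of_eq hX hGY).map (·.trans e₁)⟩
    rcases eq_or_ne k i.succ with rfl | h₂
    · have hZ : G i.succ.succ = F i.succ.succ := hG _ (by simp [Fin.ext_iff])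
      rw [Equiv.swap_apply_right]
      exact ⟨hGY.trans_le (hY'Z.trans_eq hZ.symm),
        (nonempty_factor_equiv_of_eq hGY hZ).map (·.trans e₂)⟩
    · have hlo : G k.castSucc = F k.castSucc := hG _ (by simpa [Fin.ext_iff] using h₂)
      have hhi : G k.succ = F k.succ := hG _ (by simpa [Fin.ext_iff] using h₁)
      rw [Equiv.swap_apply_of_ne_of_ne h₁ h₂, hlo, hhi]
      exact ⟨hmono k.castSucc_le_succ, nonempty_factor_equiv_of_eq hlo hhi⟩
  refine ⟨G, ⟨Fin.monotone_iff_le_succ.mpr fun k => (hstep k).1, ?_, ?_,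
    fun k => (hsimp _).congr (hstep k).2.some⟩, fun k => (hstep k).2⟩
  · exact (hG 0 (Fin.succ_ne_zero _).symm).trans hbot
  · exact (hG _ (by simp [Fin.ext_iff]; omega)).trans htop

theorem swap_castSucc_succ_mem_factorPermutations {n : ℕ} (i : Fin n) :
    Equiv.swap i.castSucc i.succ ∈ factorPermutations R M (n + 1) :=
  fun _ hF => exists_isJHFiltration_swap hF i

variable (R M) in
theorem factorPermutations_eq_top (u : ℕ) : factorPermutations R M u = ⊤ := by
  rw [eq_top_iff]
  cases u with
  | zero => exact fun σ _ => Subsingleton.elim σ 1 ▸ one_mem _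
  | succ n =>
    rw [← Equiv.Perm.mclosure_swap_castSucc_succ, Submonoid.closure_le]
    rintro _ ⟨i, rfl⟩
    exact swap_castSucc_succ_mem_factorPermutations i

end Filtration

/-- Over a commutative ring, the factors of a Jordan–Hölder filtration
can be realized in any prescribed order: if `M` has a Jordan–Hölder filtration of length
`u` with factors `T₁, …, T_u`, then for every permutation `σ` of the indices there is a
Jordan–Hölder filtration of `M` whose `i`-th factor is isomorphic to `T_{σ(i)}`. -/
theorem jh_filtration_perm (A : Type) [CommRing A]
    (M : Type) [AddCommGroup M] [Module A M] (u : ℕ)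
    (T : Fin u → Type) [∀ i, AddCommGroup (T i)] [∀ i, Module A (T i)]
    (F : Fin (u + 1) → Submodule A M) (hF : IsJHFiltration F)
    (hT : ∀ i : Fin u, Nonempty (chainFactor F i ≃ₗ[A] T i))
    (σ : Equiv.Perm (Fin u)) :
    ∃ G : Fin (u + 1) → Submodule A M, IsJHFiltration G ∧
      ∀ i : Fin u, Nonempty (chainFactor G i ≃ₗ[A] T (σ i)) := by
  have hσ : σ ∈ factorPermutations A M u :=
    factorPermutations_eq_top A M u ▸ Submonoid.mem_top σ
  obtain ⟨G, hG, hGF⟩ := hσ F hF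
  exact ⟨G, hG, fun i => ⟨(hGF i).some.trans (hT (σ i)).some⟩⟩

end NCT
end

section
/- Let A be a k-algebra and let S and T be non-isomorphic finite-dimensional simple A-modules. Suppose 0 → S → X → T → 0 is a non-split short exact sequence of A-modules. Then X has no submodule isomorphic to T; consequently every Jordan–Hölder filtration of X has bottom factor isomorphic to S and top factor isomorphic to T, so that X ∈ O^l_{{S}{T}} but X ∉ O^l_{{T}{S}}, and hence O^l_{{S}} ∧ O^l_{{T}} = O^l_{{S}{T}} is not equivalent (≈) to O^l_{{T}{S}} = O^l_{{T}} ∧ O^l_{{S}}. -/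
/-!
Common setup: Jordan–Hölder filtrations of finite-dimensional modules, letters
(subsets of `simp A`, i.e. sets of simple finite-dimensional modules taken up to
isomorphism), words of letters, and the left/right basic opens of the
non-commutative topology on `rep A`.
-/

namespace NCT

/-- The letter `{S} ⊆ simp A`: the isomorphism class of the module `S`. -/
def isoClass (A : Type) [Ring A] (S : Type) [AddCommGroup S] [Module A S] :
    Set (ModuleCat.{0} A) :=
  {N | Nonempty (N ≃ₗ[A] S)}

/-!
In a non-split extension `0 → S → X → T → 0` of simple modules, `ker g ≅ S` is both an atom and a
coatom of the lattice of submodules, and it has no complement, since a complement would be mapped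
isomorphically onto `T` by `g` and so yield a section. In any bounded lattice such an element is
the only atom and the only coatom. Hence `ker g` is the only simple submodule and the only maximal
submodule of `X`: no submodule is isomorphic to `T`, and every Jordan–Hölder filtration of `X`
begins with `S` and ends with `T`. The filtration `0 ⊂ ker g ⊂ X` puts `X` into
`𝒪^l_{{S}{T}} ∩ rep({S, T})`, while the bottom factor `S ≇ T` keeps it out of `𝒪^l_{{T}{S}}`.
-/

end NCT

section Lattice

variable {α : Type*} [Lattice α] [BoundedOrder α] {a b : α}

theorem IsAtom.eq_of_isAtom_of_forall_not_isCompl (ha : IsAtom a) (ha' : IsCoatom a)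
    (hcompl : ∀ c, ¬ IsCompl a c) (hb : IsAtom b) : b = a := by
  by_contra hba
  have hnle : ¬ b ≤ a := fun hle => hba ((ha.le_iff_eq hb.ne_bot).1 hle)
  exact hcompl b ⟨ha.disjoint_of_ne hb (Ne.symm hba), ha'.not_le_iff_codisjoint.1 hnle⟩

theorem IsCoatom.eq_of_isCoatom_of_forall_not_isCompl (ha' : IsCoatom a) (ha : IsAtom a)
    (hcompl : ∀ c, ¬ IsCompl a c) (hb : IsCoatom b) : b = a := by
  by_contra hba
  have hnle : ¬ a ≤ b := fun hle => hba ((ha'.le_iff_eq hb.ne_top).1 hle)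
  exact hcompl b ⟨ha.not_le_iff_disjoint.1 hnle, ha'.codisjoint_of_ne hb (Ne.symm hba)⟩

end Lattice

theorem exists_comp_eq_id_of_isCompl_ker {A : Type} [Ring A] {X T : Type} [AddCommGroup X]
    [Module A X] [AddCommGroup T] [Module A T] {g : X →ₗ[A] T} (hg : Function.Surjective g)
    {N : Submodule A X} (h : IsCompl (LinearMap.ker g) N) :
    ∃ s : T →ₗ[A] X, g ∘ₗ s = LinearMap.id := by
  let e := Submodule.quotientEquivOfIsCompl _ _ h
  let eg := g.quotKerEquivOfSurjective hg
  refine ⟨N.subtype ∘ₗ (e.toLinearMap ∘ₗ eg.symm.toLinearMap), ?_⟩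
  ext t
  calc g (e (eg.symm t)) = eg (Submodule.Quotient.mk (e (eg.symm t))) := rfl
    _ = t := by rw [Submodule.mk_quotientEquivOfIsCompl_apply, eg.apply_symm_apply]

namespace NCT

section Filtrations

variable {A : Type} [Ring A] {M : Type} [AddCommGroup M] [Module A M]

noncomputable def chainFactorEquivOfEqBot {u : ℕ} (F : Fin (u + 1) → Submodule A M) (i : Fin u)
    (h : F i.castSucc = ⊥) : chainFactor F i ≃ₗ[A] F i.succ :=
  Submodule.quotEquivOfEqBot _ (by rw [h, Submodule.comap_bot, Submodule.ker_subtype])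

noncomputable def chainFactorEquivOfEqTop {u : ℕ} (F : Fin (u + 1) → Submodule A M) (i : Fin u)
    (h : F i.succ = ⊤) : chainFactor F i ≃ₗ[A] M ⧸ F i.castSucc :=
  Submodule.Quotient.equiv _ _ ((LinearEquiv.ofEq _ _ h).trans (LinearEquiv.ofTop ⊤ rfl))
    (by ext x; simp)

theorem IsJHFiltration.length_pos [Nontrivial M] {u : ℕ} {F : Fin (u + 1) → Submodule A M}
    (hF : IsJHFiltration F) : 0 < u := by
  obtain ⟨-, hbot, htop, -⟩ := hF
  refine Nat.pos_of_ne_zero fun hu => (bot_ne_top : (⊥ : Submodule A M) ≠ ⊤) ?_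
  subst hu
  exact hbot.symm.trans htop

noncomputable def IsJHFiltration.bottomFactorEquiv {u : ℕ} {F : Fin (u + 1) → Submodule A M}
    (hF : IsJHFiltration F) (hu : 0 < u) : chainFactor F ⟨0, hu⟩ ≃ₗ[A] F ⟨1, by omega⟩ :=
  chainFactorEquivOfEqBot F _ (by simpa using hF.2.1)

noncomputable def IsJHFiltration.topFactorEquiv {u : ℕ} {F : Fin (u + 1) → Submodule A M}
    (hF : IsJHFiltration F) (hu : 0 < u) :
    chainFactor F ⟨u - 1, Nat.sub_lt hu Nat.one_pos⟩ ≃ₗ[A] M ⧸ F ⟨u - 1, by omega⟩ :=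
  chainFactorEquivOfEqTop F _ (by
    convert hF.2.2.1 using 2
    ext
    simp only [Fin.succ_mk, Fin.val_last]
    omega)

def twoStepFiltration (R : Submodule A M) : Fin 3 → Submodule A M := ![⊥, R, ⊤]

noncomputable def twoStepFiltration.factorZeroEquiv (R : Submodule A M) :
    chainFactor (twoStepFiltration R) 0 ≃ₗ[A] R :=
  chainFactorEquivOfEqBot _ 0 rfl

noncomputable def twoStepFiltration.factorOneEquiv (R : Submodule A M) :
    chainFactor (twoStepFiltration R) 1 ≃ₗ[A] M ⧸ R :=
  (chainFactorEquivOfEqTop _ 1 rfl).trans (Submodule.quotEquivOfEq _ R rfl)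

theorem isJHFiltration_twoStepFiltration (R : Submodule A M) [IsSimpleModule A R]
    [IsSimpleModule A (M ⧸ R)] : IsJHFiltration (twoStepFiltration R) := by
  refine ⟨?_, rfl, rfl, ?_⟩
  · rw [Fin.monotone_iff_le_succ]
    intro i
    fin_cases i
    exacts [bot_le, le_top]
  · intro i
    fin_cases i
    exacts [IsSimpleModule.congr (twoStepFiltration.factorZeroEquiv R),
      IsSimpleModule.congr (twoStepFiltration.factorOneEquiv R)]

end Filtrations

theorem memLetter_isoClass_iff {A : Type} [Ring A] {S N : Type} [AddCommGroup S] [Module A S]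
    [AddCommGroup N] [Module A N] : MemLetter (isoClass A S) N ↔ Nonempty (N ≃ₗ[A] S) :=
  ⟨fun ⟨_, ⟨eP⟩, ⟨e⟩⟩ => ⟨e.trans eP⟩, fun ⟨e⟩ => ⟨ModuleCat.of A S, ⟨LinearEquiv.refl A S⟩, ⟨e⟩⟩⟩

section Words

variable {k A : Type} [Field k] [Ring A] [Algebra k A]

theorem wordSup_of_perm {w w' : Word A} (h : w'.Perm w) : wordSup w w' = w := by
  rw [wordSup, Multiset.coe_eq_coe.2 h, Multiset.eq_union_left le_rfl]

theorem mem_leftOpen_of_factors {w : Word A} {M : ModuleCat.{0} A} (hM : M ∈ FDRep k A)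
    {F : Fin (w.length + 1) → Submodule A M} (hF : IsJHFiltration F)
    (hfac : ∀ i, MemLetter (w.get i) (chainFactor F i)) : M ∈ leftOpen k A w :=
  ⟨hM, w.length, F, le_rfl, hF, hfac⟩

theorem mem_repMS_of_factors {w : Word A} {M : ModuleCat.{0} A} (hM : M ∈ FDRep k A)
    {F : Fin (w.length + 1) → Submodule A M} (hF : IsJHFiltration F)
    (hfac : ∀ i, MemLetter (w.get i) (chainFactor F i)) : M ∈ RepMS k A w :=
  ⟨hM, w.length, F, hF, w, rfl, Function.Embedding.refl _, hfac⟩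

theorem not_equivL_of_mem_of_notMem {w w' : Word A} {M : ModuleCat.{0} A}
    (hw : M ∈ leftOpen k A w) (hrep : M ∈ RepMS k A (wordSup w w')) (hw' : M ∉ leftOpen k A w') :
    ¬ EquivL k A w w' :=
  fun h => hw' (h ▸ ⟨hw, hrep⟩ : M ∈ leftOpen k A w' ∩ RepMS k A (wordSup w w')).1

end Words

theorem mem_fdRep_of_exact {k A : Type} [Field k] [Ring A] [Algebra k A] {S X T : Type}
    [AddCommGroup S] [Module A S] [Module k S] [IsScalarTower k A S] [Module.Finite k S]
    [AddCommGroup T] [Module A T] [Module k T] [IsScalarTower k A T] [Module.Finite k T]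
    [AddCommGroup X] [Module A X] {f : S →ₗ[A] X} {g : X →ₗ[A] T}
    (hfg : LinearMap.range f = LinearMap.ker g) (hg : Function.Surjective g) :
    ModuleCat.of A X ∈ FDRep k A := by
  -- this is definitionally the `k`-module structure of `RestrictScalars k A X`
  let : Module k X := Module.compHom X (algebraMap k A)
  have : IsScalarTower k A X := IsScalarTower.of_compHom k A X
  have : Module.Finite k X :=
    Module.Finite.of_exact (f := f.restrictScalars k) (g := g.restrictScalars k)
      (LinearMap.exact_iff.2 hfg.symm : Function.Exact f g) hg
  exact this

section Extension

variable {A : Type} [Ring A] {S X T : Type} [AddCommGroup S] [Module A S] [AddCommGroup X]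
  [Module A X] [AddCommGroup T] [Module A T]

structure IsNonsplitExtension (f : S →ₗ[A] X) (g : X →ₗ[A] T) : Prop where
  injective : Function.Injective f
  surjective : Function.Surjective g
  range_eq_ker : LinearMap.range f = LinearMap.ker g
  not_split : ¬ ∃ h : T →ₗ[A] X, g ∘ₗ h = LinearMap.id

namespace IsNonsplitExtension

variable {f : S →ₗ[A] X} {g : X →ₗ[A] T} (H : IsNonsplitExtension f g)
include H

noncomputable def kerEquiv : LinearMap.ker g ≃ₗ[A] S :=
  (LinearEquiv.ofEq _ _ H.range_eq_ker.symm).trans (LinearEquiv.ofInjective f H.injective).symm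

theorem isAtom_ker [IsSimpleModule A S] : IsAtom (LinearMap.ker g) :=
  isSimpleModule_iff_isAtom.1 (IsSimpleModule.congr H.kerEquiv)

theorem isCoatom_ker [IsSimpleModule A T] : IsCoatom (LinearMap.ker g) :=
  isSimpleModule_iff_isCoatom.1 (IsSimpleModule.congr (g.quotKerEquivOfSurjective H.surjective))

theorem not_isCompl_ker (N : Submodule A X) : ¬ IsCompl (LinearMap.ker g) N :=
  fun h => H.not_split (exists_comp_eq_id_of_isCompl_ker H.surjective h)

variable [IsSimpleModule A S] [IsSimpleModule A T]

theorem eq_ker_of_isSimpleModule (N : Submodule A X) [IsSimpleModule A N] :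
    N = LinearMap.ker g :=
  H.isAtom_ker.eq_of_isAtom_of_forall_not_isCompl H.isCoatom_ker H.not_isCompl_ker
    (isSimpleModule_iff_isAtom.1 ‹_›)

theorem eq_ker_of_isSimpleModule_quotient (N : Submodule A X) [IsSimpleModule A (X ⧸ N)] :
    N = LinearMap.ker g :=
  H.isCoatom_ker.eq_of_isCoatom_of_forall_not_isCompl H.isAtom_ker H.not_isCompl_ker
    (isSimpleModule_iff_isCoatom.1 ‹_›)

theorem isEmpty_submodule_equiv (hST : IsEmpty (S ≃ₗ[A] T)) (N : Submodule A X) :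
    IsEmpty (N ≃ₗ[A] T) := by
  refine ⟨fun e => hST.false ?_⟩
  have : IsSimpleModule A N := IsSimpleModule.congr e
  exact H.kerEquiv.symm.trans ((LinearEquiv.ofEq _ _ (H.eq_ker_of_isSimpleModule N).symm).trans e)

theorem isJHFiltration_factors {u : ℕ} {F : Fin (u + 1) → Submodule A X} (hF : IsJHFiltration F) :
    ∃ hu : 0 < u, Nonempty (chainFactor F ⟨0, hu⟩ ≃ₗ[A] S) ∧
      Nonempty (chainFactor F ⟨u - 1, Nat.sub_lt hu Nat.one_pos⟩ ≃ₗ[A] T) := by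
  have := IsSimpleModule.nontrivial A T
  have : Nontrivial X := H.surjective.nontrivial
  have hu := hF.length_pos
  refine ⟨hu, ?_, ?_⟩
  · have e := hF.bottomFactorEquiv hu
    have := hF.2.2.2 ⟨0, hu⟩
    have : IsSimpleModule A (F ⟨1, by omega⟩) := IsSimpleModule.congr e.symm
    exact ⟨e.trans ((LinearEquiv.ofEq _ _ (H.eq_ker_of_isSimpleModule _)).trans H.kerEquiv)⟩
  · have e := hF.topFactorEquiv hu
    have := hF.2.2.2 ⟨u - 1, Nat.sub_lt hu Nat.one_pos⟩
    have : IsSimpleModule A (X ⧸ F ⟨u - 1, by omega⟩) := IsSimpleModule.congr e.symm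
    exact ⟨e.trans ((Submodule.quotEquivOfEq _ _ (H.eq_ker_of_isSimpleModule_quotient _)).trans
      (g.quotKerEquivOfSurjective H.surjective))⟩

end IsNonsplitExtension

end Extension

/-- If `0 → S → X → T → 0` is a non-split short exact sequence with
`S`, `T` non-isomorphic finite-dimensional simples, then `X` has no submodule isomorphic
to `T`; every Jordan–Hölder filtration of `X` has bottom factor `S` and top factor `T`;
hence `X ∈ 𝒪^l_{{S}{T}}`, `X ∉ 𝒪^l_{{T}{S}}`, and
`𝒪^l_{{S}} ∧ 𝒪^l_{{T}} = 𝒪^l_{{S}{T}} ≉ 𝒪^l_{{T}{S}} = 𝒪^l_{{T}} ∧ 𝒪^l_{{S}}`. -/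
theorem nonsplit_extension_noncommutative (k : Type) [Field k]
    (A : Type) [Ring A] [Algebra k A]
    (S T : Type) [AddCommGroup S] [Module A S] [AddCommGroup T] [Module A T]
    [Module k S] [IsScalarTower k A S] [FiniteDimensional k S]
    [Module k T] [IsScalarTower k A T] [FiniteDimensional k T]
    (hS : IsSimpleModule A S) (hT : IsSimpleModule A T)
    (hST : IsEmpty (S ≃ₗ[A] T))
    (X : Type) [AddCommGroup X] [Module A X]
    (f : S →ₗ[A] X) (g : X →ₗ[A] T)
    (hf : Function.Injective f) (hg : Function.Surjective g)
    (hfg : LinearMap.range f = LinearMap.ker g)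
    (hnonsplit : ¬ ∃ h : T →ₗ[A] X, g ∘ₗ h = LinearMap.id) :
    (∀ N : Submodule A X, IsEmpty (N ≃ₗ[A] T)) ∧
    (∀ (u : ℕ) (F : Fin (u + 1) → Submodule A X), IsJHFiltration F →
      ∃ hu : 0 < u, Nonempty (chainFactor F ⟨0, hu⟩ ≃ₗ[A] S) ∧
        Nonempty (chainFactor F ⟨u - 1, by omega⟩ ≃ₗ[A] T)) ∧
    ModuleCat.of A X ∈ leftOpen k A [isoClass A S, isoClass A T] ∧
    ModuleCat.of A X ∉ leftOpen k A [isoClass A T, isoClass A S] ∧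
    ¬ EquivL k A [isoClass A S, isoClass A T] [isoClass A T, isoClass A S] := by
  have H : IsNonsplitExtension f g := ⟨hf, hg, hfg, hnonsplit⟩
  have hFD := mem_fdRep_of_exact (k := k) hfg hg
  have : IsSimpleModule A (LinearMap.ker g) := isSimpleModule_iff_isAtom.2 H.isAtom_ker
  have : IsSimpleModule A (X ⧸ LinearMap.ker g) := isSimpleModule_iff_isCoatom.2 H.isCoatom_ker
  have hJH := isJHFiltration_twoStepFiltration (LinearMap.ker g)
  have hfac : ∀ i, MemLetter ([isoClass A S, isoClass A T].get i)
      (chainFactor (twoStepFiltration (LinearMap.ker g)) i) := by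
    intro i
    fin_cases i
    exacts [memLetter_isoClass_iff.2 ⟨(twoStepFiltration.factorZeroEquiv _).trans H.kerEquiv⟩,
      memLetter_isoClass_iff.2 ⟨(twoStepFiltration.factorOneEquiv _).trans
        (g.quotKerEquivOfSurjective hg)⟩]
  have hmem : ModuleCat.of A X ∈ leftOpen k A [isoClass A S, isoClass A T] :=
    mem_leftOpen_of_factors hFD hJH hfac
  have hrep := mem_repMS_of_factors hFD hJH hfac
  rw [← wordSup_of_perm (.swap _ _ [])] at hrep
  have hnotMem : ModuleCat.of A X ∉ leftOpen k A [isoClass A T, isoClass A S] := by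
    rintro ⟨-, u, F, _, hF, hfac'⟩
    obtain ⟨_, ⟨e⟩, -⟩ := H.isJHFiltration_factors hF
    exact hST.false (e.symm.trans (memLetter_isoClass_iff.1 (hfac' 0)).some)
  exact ⟨H.isEmpty_submodule_equiv hST, fun _ _ => H.isJHFiltration_factors, hmem, hnotMem,
    not_equivL_of_mem_of_notMem hmem hrep hnotMem⟩

end NCT
end

section
/- Let M be a finite-dimensional semisimple A-module and let w = V_1 ⋯ V_k be a word of letters. If w' = V_{σ(1)} ⋯ V_{σ(k)} for some permutation σ of {1, …, k}, then M ∈ O^l_w if and only if M ∈ O^l_{w'}; likewise M ∈ O^r_w if and only if M ∈ O^r_{w'}. (Hence the non-commutative topology induced on semisimple representations is commutative.) -/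
/-!
Common setup: Jordan–Hölder filtrations of finite-dimensional modules, letters
(subsets of `simp A`, i.e. sets of simple finite-dimensional modules taken up to
isomorphism), words of letters, and the left/right basic opens of the
non-commutative topology on `rep A`.
-/

namespace NCT

/-!
In a semisimple module every step `Fᵢ ⊆ Fᵢ₊₁` of a Jordan–Hölder filtration has a complement
`Cᵢ ≅ Fᵢ₊₁ / Fᵢ`, and the `Cᵢ` form an independent family with `Fⱼ = C₀ ⊕ ⋯ ⊕ Cⱼ₋₁`. Summing
the same family in any other order is again a Jordan–Hölder filtration, whose factors are the
old ones permuted.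
-/

open Function Equiv

section PrefixSup

variable {α : Type*} {u : ℕ}

def initSeg (j : Fin (u + 1)) : Finset (Fin u) :=
  {l | l.castSucc < j}

@[simp]
lemma initSeg_zero : initSeg (0 : Fin (u + 1)) = ∅ := by
  simp [initSeg]

@[simp]
lemma initSeg_last : initSeg (Fin.last u) = Finset.univ := by
  simp [initSeg, Fin.castSucc_lt_last]

lemma initSeg_succ (i : Fin u) : initSeg i.succ = insert i (initSeg i.castSucc) := by
  ext l
  simp only [initSeg, Finset.mem_filter, Finset.mem_univ, true_and, Finset.mem_insert,
    Fin.castSucc_lt_succ_iff, Fin.castSucc_lt_castSucc_iff]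
  exact le_iff_eq_or_lt

lemma self_notMem_initSeg_castSucc (i : Fin u) : i ∉ initSeg i.castSucc := by
  simp [initSeg]

lemma initSeg_mono : Monotone (initSeg (u := u)) := fun _ _ h _ hl => by
  simp only [initSeg, Finset.mem_filter, Finset.mem_univ, true_and] at hl ⊢
  exact hl.trans_le h

variable [SemilatticeSup α] [OrderBot α]

def prefixSup (D : Fin u → α) (j : Fin (u + 1)) : α :=
  (initSeg j).sup D

variable (D : Fin u → α)

@[simp]
lemma prefixSup_zero : prefixSup D 0 = ⊥ := by
  simp [prefixSup]

lemma prefixSup_last : prefixSup D (Fin.last u) = Finset.univ.sup D := by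
  simp [prefixSup]

lemma prefixSup_succ (i : Fin u) : prefixSup D i.succ = D i ⊔ prefixSup D i.castSucc := by
  rw [prefixSup, initSeg_succ, Finset.sup_insert, prefixSup]

lemma prefixSup_mono : Monotone (prefixSup D) := fun _ _ h =>
  Finset.sup_mono (initSeg_mono h)

lemma eq_prefixSup {F : Fin (u + 1) → α} (h0 : F 0 = ⊥)
    (hstep : ∀ i, D i ⊔ F i.castSucc = F i.succ) : F = prefixSup D := by
  funext j
  induction j using Fin.induction with
  | zero => rw [h0, prefixSup_zero]
  | succ i ih => rw [← hstep, ih, prefixSup_succ]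

end PrefixSup

section Independence

variable {α : Type*} [CompleteLattice α] {u : ℕ} {D : Fin u → α}

lemma disjoint_prefixSup_of_iSupIndep (hD : iSupIndep D) (i : Fin u) :
    Disjoint (D i) (prefixSup D i.castSucc) :=
  hD.supIndep' Finset.univ (Finset.subset_univ _) (Finset.mem_univ i)
    (self_notMem_initSeg_castSucc i)

lemma iSupIndep_of_disjoint_prefixSup [IsModularLattice α]
    (h : ∀ i, Disjoint (D i) (prefixSup D i.castSucc)) : iSupIndep D := by
  have hseg : ∀ j, (initSeg j).SupIndep D := by
    intro j
    induction j using Fin.induction with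
    | zero => simp
    | succ i ih =>
      classical
      rw [initSeg_succ]
      exact ih.insert (h i)
  rw [iSupIndep_iff_supIndep_univ, ← initSeg_last]
  exact hseg _

end Independence

section Semisimple

variable {A M : Type} [Ring A] [AddCommGroup M] [Module A M]

lemma exists_disjoint_sup_eq_of_le [IsSemisimpleModule A M] {D N : Submodule A M} (h : D ≤ N) :
    ∃ C : Submodule A M, Disjoint C D ∧ C ⊔ D = N := by
  obtain ⟨c, hc⟩ := exists_isCompl D
  refine ⟨c ⊓ N, hc.disjoint.symm.mono_left inf_le_left, ?_⟩
  rw [sup_comm, ← sup_inf_assoc_of_le _ h, hc.codisjoint.eq_top, top_inf_eq]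

lemma nonempty_quotient_equiv_of_disjoint_of_sup_eq {C D N : Submodule A M} (hd : Disjoint C D)
    (hs : C ⊔ D = N) : Nonempty ((N ⧸ D.comap N.subtype) ≃ₗ[A] C) := by
  subst hs
  refine ⟨(LinearMap.quotientInfEquivSupQuotient C D).symm.trans
    (Submodule.quotEquivOfEqBot _ ?_)⟩
  rw [← Submodule.comap_inf, hd.eq_bot, Submodule.comap_bot, Submodule.ker_subtype]

lemma nonempty_chainFactor_prefixSup_equiv {u : ℕ} {D : Fin u → Submodule A M}
    (hD : iSupIndep D) (j : Fin u) : Nonempty (chainFactor (prefixSup D) j ≃ₗ[A] D j) :=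
  nonempty_quotient_equiv_of_disjoint_of_sup_eq (disjoint_prefixSup_of_iSupIndep hD j)
    (prefixSup_succ D j).symm

theorem IsJHFiltration.exists_factors_perm [IsSemisimpleModule A M] {u : ℕ}
    {F : Fin (u + 1) → Submodule A M} (hF : IsJHFiltration F) (τ : Perm (Fin u)) :
    ∃ G : Fin (u + 1) → Submodule A M, IsJHFiltration G ∧
      ∀ j, Nonempty (chainFactor G j ≃ₗ[A] chainFactor F (τ j)) := by
  obtain ⟨hmono, h0, htop, hsimple⟩ := hF
  choose C hdisj hsup using fun i : Fin u =>
    exists_disjoint_sup_eq_of_le (hmono (Fin.castSucc_le_succ i))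
  obtain rfl : F = prefixSup C := eq_prefixSup C h0 hsup
  have hC : iSupIndep C := iSupIndep_of_disjoint_prefixSup hdisj
  have hfactor : ∀ j, Nonempty (chainFactor (prefixSup (C ∘ τ)) j ≃ₗ[A]
      chainFactor (prefixSup C) (τ j)) := fun j => by
    obtain ⟨e₁⟩ := nonempty_chainFactor_prefixSup_equiv (hC.comp τ.injective) j
    obtain ⟨e₂⟩ := nonempty_chainFactor_prefixSup_equiv hC (τ j)
    exact ⟨e₁.trans e₂.symm⟩
  refine ⟨prefixSup (C ∘ τ), ⟨prefixSup_mono _, prefixSup_zero _, ?_, fun j => ?_⟩, hfactor⟩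
  · rw [prefixSup_last, Finset.sup_univ_eq_iSup, ← htop, prefixSup_last, Finset.sup_univ_eq_iSup]
    exact τ.iSup_comp (g := C)
  · have := hsimple (τ j)
    exact IsSimpleModule.congr (hfactor j).some

end Semisimple

lemma exists_perm_comp_eq_comp {α β β' : Type*} [Finite α] {ι : β → α} {ι' : β' → α}
    (hι : Injective ι) (hι' : Injective ι') (f : β' ≃ β) :
    ∃ τ : Perm α, ∀ b, τ (ι' b) = ι (f b) := by
  classical
  let e : {x // x ∈ Set.range ι'} ≃ {x // x ∈ Set.range ι} :=
    (ofInjective ι' hι').symm.trans (f.trans (ofInjective ι hι))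
  refine ⟨e.extendSubtype, fun b => ?_⟩
  rw [extendSubtype_apply_of_mem e _ (Set.mem_range_self b)]
  simp [e, ofInjective_symm_apply]

lemma MemLetter.of_linearEquiv {A : Type} [Ring A] {V : Set (ModuleCat.{0} A)} {N N' : Type}
    [AddCommGroup N] [Module A N] [AddCommGroup N'] [Module A N']
    (e : N ≃ₗ[A] N') (h : MemLetter V N') : MemLetter V N :=
  let ⟨P, hP, ⟨e'⟩⟩ := h
  ⟨P, hP, ⟨e.trans e'⟩⟩

lemma exists_isJHFiltration_memLetter_reindex {A M : Type} [Ring A] [AddCommGroup M]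
    [Module A M] [IsSemisimpleModule A M] {u k k' : ℕ} {F : Fin (u + 1) → Submodule A M}
    (hF : IsJHFiltration F) {V : Fin k → Set (ModuleCat.{0} A)}
    {V' : Fin k' → Set (ModuleCat.{0} A)} (f : Fin k' ≃ Fin k) (hV : ∀ i, V' i = V (f i))
    {ι : Fin k → Fin u} {ι' : Fin k' → Fin u} (hι : Injective ι) (hι' : Injective ι')
    (hmem : ∀ i, MemLetter (V i) (chainFactor F (ι i))) :
    ∃ G : Fin (u + 1) → Submodule A M, IsJHFiltration G ∧
      ∀ i, MemLetter (V' i) (chainFactor G (ι' i)) := by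
  obtain ⟨τ, hτ⟩ := exists_perm_comp_eq_comp hι hι' f
  obtain ⟨G, hG, hfactor⟩ := hF.exists_factors_perm τ
  refine ⟨G, hG, fun i => ?_⟩
  obtain ⟨e⟩ := hfactor (ι' i)
  rw [hτ] at e
  exact hV i ▸ (hmem (f i)).of_linearEquiv e

section Opens

variable (k A : Type) [Field k] [Ring A] [Algebra k A] {M : ModuleCat.{0} A}
  [IsSemisimpleModule A M] {w w' : Word A}

lemma leftOpen_of_equiv (f : Fin w'.length ≃ Fin w.length) (hf : ∀ i, w'.get i = w.get (f i))
    (hM : M ∈ leftOpen k A w) : M ∈ leftOpen k A w' := by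
  obtain ⟨hfd, u, F, hu, hF, hmem⟩ := hM
  have hu' : w'.length ≤ u := (Fin.equiv_iff_eq.mp ⟨f⟩).trans_le hu
  obtain ⟨G, hG, hmem'⟩ := exists_isJHFiltration_memLetter_reindex hF f hf
    (Fin.castLE_injective hu) (Fin.castLE_injective hu') hmem
  exact ⟨hfd, u, G, hu', hG, hmem'⟩

lemma rightOpen_of_equiv (f : Fin w'.length ≃ Fin w.length) (hf : ∀ i, w'.get i = w.get (f i))
    (hM : M ∈ rightOpen k A w) : M ∈ rightOpen k A w' := by
  obtain ⟨hfd, u, F, hu, hF, hmem⟩ := hM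
  have hu' : w'.length ≤ u := (Fin.equiv_iff_eq.mp ⟨f⟩).trans_le hu
  have hinj {n : ℕ} (hn : n ≤ u) :
      Injective fun i : Fin n => (⟨u - n + i.1, by omega⟩ : Fin u) :=
    fun a b h => Fin.ext (Nat.add_left_cancel (congrArg Fin.val h))
  obtain ⟨G, hG, hmem'⟩ := exists_isJHFiltration_memLetter_reindex hF f hf
    (hinj hu) (hinj hu') hmem
  exact ⟨hfd, u, G, hu', hG, hmem'⟩

end Opens

theorem semisimple_membership_perm_general (k A : Type) [Field k]
    [Ring A] [Algebra k A]
    (M : ModuleCat.{0} A) (hss : IsSemisimpleModule A M)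
    (w : Word A)
    (σ : Equiv.Perm (Fin w.length))
    (w' : Word A) (hw' : w' = List.ofFn fun i => w.get (σ i)) :
    (M ∈ leftOpen k A w ↔ M ∈ leftOpen k A w') ∧
    (M ∈ rightOpen k A w ↔ M ∈ rightOpen k A w') := by
  let f : Fin w'.length ≃ Fin w.length := (finCongr (by simp [hw'])).trans σ
  have hf : ∀ i, w'.get i = w.get (f i) := fun i => by
    subst hw'
    simp [f, Fin.cast]
  have hf' : ∀ i, w.get i = w'.get (f.symm i) := fun i => by
    rw [hf, Equiv.apply_symm_apply]
  exact ⟨⟨leftOpen_of_equiv k A f hf, leftOpen_of_equiv k A f.symm hf'⟩,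
    ⟨rightOpen_of_equiv k A f hf, rightOpen_of_equiv k A f.symm hf'⟩⟩

/-- For a finite-dimensional semisimple module `M` and a word `w'`
obtained from `w` by a permutation `σ` of its letters, `M ∈ 𝒪^l_w ↔ M ∈ 𝒪^l_{w'}` and
`M ∈ 𝒪^r_w ↔ M ∈ 𝒪^r_{w'}`: the induced non-commutative topology on semisimple
representations is commutative. -/
theorem semisimple_membership_perm (k A : Type) [Field k] [IsAlgClosed k]
    [Ring A] [Algebra k A] [Algebra.FiniteType k A]
    (M : ModuleCat.{0} A) (hfd : M ∈ FDRep k A) (hss : IsSemisimpleModule A M)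
    (w : Word A) (hw : ∀ V ∈ w, V ⊆ SimpFD k A)
    (σ : Equiv.Perm (Fin w.length))
    (w' : Word A) (hw' : w' = List.ofFn fun i => w.get (σ i)) :
    (M ∈ leftOpen k A w ↔ M ∈ leftOpen k A w') ∧
    (M ∈ rightOpen k A w ↔ M ∈ rightOpen k A w') :=
  semisimple_membership_perm_general k A M hss w σ w' hw'

end NCT
end
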